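/- Let R be a Noetherian local ring, f_1, f_2, f ∈ m, J = (f_1, f_2), I = (f_1, f_2, f). Fix L ≥ 2. Suppose (0 : f_1) ∩ I^{d-1} = 0 for all 1 ≤ d ≤ L and (f_1 : f_2) ⊆ (f_1 : f). Then the following are equivalent: (a) ((f_1·I^{d-1} : f_2) ∩ I^{d-1}) / (f_1·I^{d-2}) = 0 for all 2 ≤ d ≤ L; (b) E(I)_d ≅ (J·I^{d-1} : f^d)/(J·I^{d-2} : f^{d-1}) for all 2 ≤ d ≤ L (with the isomorphism induced by the natural surjection to the right-hand side). -/

import Mathlib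

open Ideal Submodule

variable {R : Type*} [CommRing R]

/-- The linear map `(a₁,…,aₘ) ↦ Σ aⱼ zⱼ`. -/
noncomputable def sumMul {m : ℕ} (z : Fin m → R) : (Fin m → R) →ₗ[R] R :=
  ∑ j, (LinearMap.proj j : (Fin m → R) →ₗ[R] R).smulRight (z j)

/-- The degree-`d` cycles of the Koszul complex of the degree-one elements
`z₁t,…,zₘt` on the Rees algebra of `I`. -/
noncomputable def kosZ1 {m : ℕ} (I : Ideal R) (z : Fin m → R) (d : ℕ) :
    Submodule R (Fin m → R) :=
  (⨅ j : Fin m, Submodule.comap (LinearMap.proj j) ((I ^ (d - 1) : Ideal R) : Submodule R R))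
    ⊓ LinearMap.ker (sumMul z)

/-- The degree-`d` boundaries of the Koszul complex of `z₁t,…,zₘt` on the Rees algebra
of `I`. -/
noncomputable def kosB1 {m : ℕ} (I : Ideal R) (z : Fin m → R) (d : ℕ) :
    Submodule R (Fin m → R) :=
  Submodule.span R {v | ∃ j l : Fin m, ∃ u ∈ I ^ (d - 2),
    v = Pi.single l (z j * u) - Pi.single j (z l * u)}

/-- The degree-`d` component of the first Koszul homology `H₁(z₁t,…,zₘt; R(I))`;
for the full sequence of generators of `I` this computes the `d`-th module of effective
relations `E(I)_d`. -/
noncomputable abbrev kosH1 {m : ℕ} (I : Ideal R) (z : Fin m → R) (d : ℕ) :=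
  ↥(kosZ1 I z d) ⧸ (Submodule.comap (kosZ1 I z d).subtype (kosB1 I z d))

/-- The quotient `A/B` of an ideal `A` by another ideal `B` (as `R`-modules). -/
noncomputable abbrev idealQuot {R : Type*} [CommRing R] (A B : Ideal R) :=
  ↥A ⧸ (Submodule.comap (Submodule.subtype (A : Submodule R R)) (B : Submodule R R))


/-!
Write `d = k + 2`. Both sides of the equivalence are quotients of the module `W` of triples
`(c, a₁, a₂)` with `a₁, a₂ ∈ I ^ (k + 1)` and `c f ^ (k + 2) = a₁ f₁ + a₂ f₂`: sending such a
triple to the Koszul cycle `(-a₁, -a₂, c f ^ (k + 1))` is onto `H₁` because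
`I ^ (k + 1) ⊆ J I ^ k + (f ^ (k + 1))`, and sending it to `c` is onto the colon quotient.
The kernel of the first map always lies in that of the second, and the reverse inclusion follows
from `(0 : f₁) ∩ I ^ (k + 1) = 0` and condition (a) in degree `d`. Conversely, a surjective
endomorphism of a Noetherian module is injective, so any isomorphism between the two quotients
forces the kernels to agree; this gives (a) in degree `d` from (a) in degree `d - 1`, or from
`(f₁ : f₂) ⊆ (f₁ : f)` when `d = 2`.
-/

open Function LinearMap in
theorem nonempty_linearEquiv_iff_ker_le_ker {W M N : Type*} [AddCommGroup W] [Module R W]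
    [AddCommGroup M] [Module R M] [AddCommGroup N] [Module R N] [IsNoetherian R M]
    {q : W →ₗ[R] M} {p : W →ₗ[R] N} (hq : Surjective q) (hp : Surjective p)
    (hqp : ker q ≤ ker p) :
    Nonempty (M ≃ₗ[R] N) ↔ ker p ≤ ker q := by
  refine ⟨fun ⟨e⟩ => ?_, fun hpq => ⟨(q.quotKerEquivOfSurjective hq).symm ≪≫ₗ
    quotEquivOfEq _ _ (le_antisymm hqp hpq) ≪≫ₗ p.quotKerEquivOfSurjective hp⟩⟩
  set π := (ker q).liftQ p hqp ∘ₗ (q.quotKerEquivOfSurjective hq).symm.toLinearMap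
  have hπq : ∀ w, π (q w) = p w := fun w => by
    simp only [π, LinearMap.comp_apply, LinearEquiv.coe_coe]
    rw [← q.quotKerEquivOfSurjective_apply_mk hq, LinearEquiv.symm_apply_apply, liftQ_apply]
  have hπ : Surjective π := fun y => let ⟨w, hw⟩ := hp y; ⟨q w, (hπq w).trans hw⟩
  have hπ_inj : Injective π := by
    have := IsNoetherian.injective_of_surjective_endomorphism (e.symm.toLinearMap ∘ₗ π)
      (e.symm.surjective.comp hπ)
    rw [LinearMap.coe_comp] at this
    exact this.of_comp
  intro w hw
  rw [mem_ker, ← hπq] at hw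
  exact hπ_inj (hw.trans π.map_zero.symm)

theorem mul_mem_pow_succ {I : Ideal R} {g u : R} {k : ℕ} (hg : g ∈ I) (hu : u ∈ I ^ k) :
    g * u ∈ I ^ (k + 1) := by
  rw [pow_succ']
  exact Ideal.mul_mem_mul hg hu

theorem mem_span_pair_mul_iff {a b x : R} {K : Ideal R} :
    x ∈ span {a, b} * K ↔ ∃ u ∈ K, ∃ v ∈ K, a * u + b * v = x := by
  simp only [span_insert a {b}, Ideal.sup_mul, Submodule.mem_sup, Ideal.mem_span_singleton_mul]
  constructor
  · rintro ⟨_, ⟨u, hu, rfl⟩, _, ⟨v, hv, rfl⟩, rfl⟩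
    exact ⟨u, hu, v, hv, rfl⟩
  · rintro ⟨u, hu, v, hv, rfl⟩
    exact ⟨_, ⟨u, hu, rfl⟩, _, ⟨v, hv, rfl⟩, rfl⟩

theorem sup_span_singleton_pow_succ_le (J : Ideal R) (f : R) (n : ℕ) :
    (J ⊔ span {f}) ^ (n + 1) ≤ J * (J ⊔ span {f}) ^ n ⊔ span {f ^ (n + 1)} := by
  induction n with
  | zero => simp
  | succ n ih =>
    have hf : span {f ^ (n + 1)} ≤ (J ⊔ span {f}) ^ (n + 1) := by
      rw [← span_singleton_pow]; exact Ideal.pow_right_mono le_sup_right _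
    calc (J ⊔ span {f}) ^ (n + 2) = (J ⊔ span {f}) ^ (n + 1) * (J ⊔ span {f}) := pow_succ _ _
      _ ≤ (J * (J ⊔ span {f}) ^ n ⊔ span {f ^ (n + 1)}) * (J ⊔ span {f}) :=
        Ideal.mul_mono_left ih
      _ = J * (J ⊔ span {f}) ^ (n + 1) ⊔ span {f ^ (n + 1)} * J ⊔ span {f ^ (n + 2)} := by
        rw [Ideal.sup_mul, mul_assoc, ← pow_succ, Ideal.mul_sup, span_singleton_mul_span_singleton,
          ← pow_succ, sup_assoc]
      _ ≤ J * (J ⊔ span {f}) ^ (n + 1) ⊔ span {f ^ (n + 2)} := by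
        rw [mul_comm (Ideal.span _) J]
        exact sup_le_sup_right (sup_le le_rfl (Ideal.mul_mono_right hf)) _

lemma sumMul_apply {m : ℕ} (z v : Fin m → R) : sumMul z v = ∑ j, v j * z j := by
  simp [sumMul, smul_eq_mul]

section Koszul

variable (f1 f2 f : R) (I : Ideal R) (k : ℕ)

lemma mem_kosZ1_iff (v : Fin 3 → R) :
    v ∈ kosZ1 I ![f1, f2, f] (k + 2) ↔
      (v 0 ∈ I ^ (k + 1) ∧ v 1 ∈ I ^ (k + 1) ∧ v 2 ∈ I ^ (k + 1)) ∧
        v 0 * f1 + v 1 * f2 + v 2 * f = 0 := by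
  simp [kosZ1, Submodule.mem_iInf, sumMul_apply, Fin.sum_univ_three, Fin.forall_fin_succ,
    and_assoc]

/-- The second Koszul differential of `z`, in the basis `e₀ ∧ e₁, e₀ ∧ e₂, e₁ ∧ e₂`. -/
def koszulD2 (z : Fin 3 → R) : (Fin 3 → R) →ₗ[R] Fin 3 → R :=
  Matrix.mulVecLin !![-z 1, -z 2, 0; z 0, 0, -z 2; 0, z 0, z 1]

lemma koszulD2_apply (z t : Fin 3 → R) :
    koszulD2 z t = ![-(z 1 * t 0 + z 2 * t 1), z 0 * t 0 - z 2 * t 2, z 0 * t 1 + z 1 * t 2] := by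
  ext i; fin_cases i <;> simp [koszulD2, Matrix.mulVec, dotProduct, Fin.sum_univ_three] <;> ring

lemma kosB1_eq_map_koszulD2 (z : Fin 3 → R) :
    kosB1 I z (k + 2) = (Submodule.pi Set.univ fun _ => (I ^ k : Ideal R)).map (koszulD2 z) := by
  apply le_antisymm
  · rw [kosB1, Submodule.span_le]
    rintro _ ⟨j, l, u, hu, rfl⟩
    -- `u • wedge j l` is the element `u eⱼ ∧ eₗ`
    let wedge : Fin 3 → Fin 3 → Fin 3 → R :=
      ![![0, ![1, 0, 0], ![0, 1, 0]], ![-![1, 0, 0], 0, ![0, 0, 1]], ![-![0, 1, 0], -![0, 0, 1], 0]]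
    refine ⟨u • wedge j l, fun i _ => Ideal.mul_mem_right _ _ hu, ?_⟩
    fin_cases j <;> fin_cases l <;> ext i <;> fin_cases i <;>
      simp [wedge, koszulD2_apply]
  · rintro _ ⟨t, ht, rfl⟩
    replace ht : ∀ i, t i ∈ I ^ k := fun i => ht i trivial
    have hD : koszulD2 z t =
        (Pi.single 1 (z 0 * t 0) - Pi.single 0 (z 1 * t 0)) +
        (Pi.single 2 (z 0 * t 1) - Pi.single 0 (z 2 * t 1)) +
        (Pi.single 2 (z 1 * t 2) - Pi.single 1 (z 2 * t 2)) := by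
      ext i; fin_cases i <;> simp [koszulD2_apply] <;> ring
    rw [hD]
    refine add_mem (add_mem ?_ ?_) ?_ <;> apply Submodule.subset_span
    exacts [⟨0, 1, t 0, ht 0, rfl⟩, ⟨0, 2, t 1, ht 1, rfl⟩, ⟨1, 2, t 2, ht 2, rfl⟩]

lemma mem_kosB1_iff (v : Fin 3 → R) :
    v ∈ kosB1 I ![f1, f2, f] (k + 2) ↔ ∃ t0 ∈ I ^ k, ∃ t1 ∈ I ^ k, ∃ t2 ∈ I ^ k,
      ![-(f2 * t0 + f * t1), f1 * t0 - f * t2, f1 * t1 + f2 * t2] = v := by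
  rw [kosB1_eq_map_koszulD2]
  constructor
  · rintro ⟨t, ht, rfl⟩
    replace ht : ∀ i, t i ∈ I ^ k := fun i => ht i trivial
    exact ⟨t 0, ht 0, t 1, ht 1, t 2, ht 2, by simp [koszulD2_apply]⟩
  · rintro ⟨t0, ht0, t1, ht1, t2, ht2, rfl⟩
    refine ⟨![t0, t1, t2], fun i _ => ?_, by simp [koszulD2_apply]⟩
    fin_cases i <;> assumption

end Koszul

section ColonSyzygies

variable (f1 f2 f : R) (J I : Ideal R) (k : ℕ)

noncomputable def colonSyz : Submodule R (Fin 3 → R) :=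
  Submodule.pi {1, 2} (fun _ => (I ^ (k + 1) : Ideal R)) ⊓
    LinearMap.ker (sumMul ![f ^ (k + 2), -f1, -f2])

def syzToCycle : (Fin 3 → R) →ₗ[R] Fin 3 → R :=
  Matrix.mulVecLin !![0, -1, 0; 0, 0, -1; f ^ (k + 1), 0, 0]

variable {f1 f2 f J I k}

lemma mem_colonSyz_iff {v : Fin 3 → R} :
    v ∈ colonSyz f1 f2 f I k ↔
      v 1 ∈ I ^ (k + 1) ∧ v 2 ∈ I ^ (k + 1) ∧ v 0 * f ^ (k + 2) = v 1 * f1 + v 2 * f2 := by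
  simp only [colonSyz, Submodule.mem_inf, Submodule.mem_pi, Set.mem_insert_iff,
    Set.mem_singleton_iff, forall_eq_or_imp, forall_eq, LinearMap.mem_ker, sumMul_apply,
    Fin.sum_univ_three, Matrix.cons_val_zero, Matrix.cons_val_one, Matrix.cons_val_two,
    Matrix.head_cons, Matrix.tail_cons]
  refine and_assoc.trans (and_congr_right' (and_congr_right' ?_))
  constructor <;> intro h <;> linear_combination h

lemma syzToCycle_apply (v : Fin 3 → R) :
    syzToCycle f k v = ![-v 1, -v 2, f ^ (k + 1) * v 0] := by
  ext i; fin_cases i <;> simp [syzToCycle, Matrix.mulVec, dotProduct, Fin.sum_univ_three]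

lemma syzToCycle_mem_kosZ1 (hf : f ∈ I) {v : Fin 3 → R} (hv : v ∈ colonSyz f1 f2 f I k) :
    syzToCycle f k v ∈ kosZ1 I ![f1, f2, f] (k + 2) := by
  obtain ⟨h1, h2, hv⟩ := mem_colonSyz_iff.1 hv
  rw [syzToCycle_apply, mem_kosZ1_iff]
  exact ⟨⟨neg_mem h1, neg_mem h2, Ideal.mul_mem_right _ _ (Ideal.pow_mem_pow hf _)⟩,
    show -v 1 * f1 + -v 2 * f2 + f ^ (k + 1) * v 0 * f = 0 by linear_combination hv⟩

lemma mem_colon_of_mem_colonSyz (hJ : J = span {f1, f2}) {v : Fin 3 → R}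
    (hv : v ∈ colonSyz f1 f2 f I k) :
    v 0 ∈ (J * I ^ (k + 1)).colon (span {f ^ (k + 2)}) := by
  obtain ⟨h1, h2, hv⟩ := mem_colonSyz_iff.1 hv
  rw [Ideal.mem_colon_span_singleton, hv, hJ]
  exact mem_span_pair_mul_iff.2 ⟨v 1, h1, v 2, h2, by ring⟩

variable (f1 f2 f J I k)

noncomputable def toKosH1 (hI : I = span {f1, f2, f}) :
    colonSyz f1 f2 f I k →ₗ[R] kosH1 I ![f1, f2, f] (k + 2) :=
  Submodule.mkQ _ ∘ₗ LinearMap.codRestrict _ (syzToCycle f k ∘ₗ (colonSyz f1 f2 f I k).subtype)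
    fun v => syzToCycle_mem_kosZ1 (hI ▸ Ideal.subset_span (by simp)) v.2

noncomputable def toColonQuot (hJ : J = span {f1, f2}) : colonSyz f1 f2 f I k →ₗ[R]
    idealQuot ((J * I ^ (k + 1)).colon (span {f ^ (k + 2)}))
      ((J * I ^ k).colon (span {f ^ (k + 1)})) :=
  Submodule.mkQ _ ∘ₗ LinearMap.codRestrict _ (LinearMap.proj 0 ∘ₗ (colonSyz f1 f2 f I k).subtype)
    fun v => mem_colon_of_mem_colonSyz hJ v.2

variable {f1 f2 f J I k}

lemma toKosH1_eq_zero_iff (hI : I = span {f1, f2, f}) (v : colonSyz f1 f2 f I k) :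
    toKosH1 f1 f2 f I k hI v = 0 ↔ syzToCycle f k v ∈ kosB1 I ![f1, f2, f] (k + 2) := by
  simp [toKosH1, Submodule.Quotient.mk_eq_zero]

lemma toColonQuot_eq_zero_iff (hJ : J = span {f1, f2}) (v : colonSyz f1 f2 f I k) :
    toColonQuot f1 f2 f J I k hJ v = 0 ↔ (v : Fin 3 → R) 0 * f ^ (k + 1) ∈ J * I ^ k := by
  rw [toColonQuot, LinearMap.comp_apply, Submodule.mkQ_apply, Submodule.Quotient.mk_eq_zero,
    Submodule.mem_comap]
  exact Ideal.mem_colon_span_singleton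

end ColonSyzygies

section Comparison

variable {f1 f2 f : R} {J I : Ideal R} {k : ℕ}

lemma exists_eq_of_mem_pow_succ (hJ : J = span {f1, f2}) (hI : I = span {f1, f2, f}) {x : R}
    (hx : x ∈ I ^ (k + 1)) :
    ∃ u1 ∈ I ^ k, ∃ u2 ∈ I ^ k, ∃ c : R, f1 * u1 + f2 * u2 + c * f ^ (k + 1) = x := by
  have hIJ : I = J ⊔ span {f} := by
    rw [hI, hJ, ← Ideal.span_union, Set.insert_union, Set.singleton_union]
  have hle := sup_span_singleton_pow_succ_le J f k
  rw [← hIJ] at hle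
  obtain ⟨a, ha, b, hb, rfl⟩ := Submodule.mem_sup.1 (hle hx)
  rw [hJ] at ha
  obtain ⟨u1, hu1, u2, hu2, rfl⟩ := mem_span_pair_mul_iff.1 ha
  obtain ⟨c, rfl⟩ := Ideal.mem_span_singleton'.1 hb
  exact ⟨u1, hu1, u2, hu2, c, rfl⟩

lemma toKosH1_surjective (hJ : J = span {f1, f2}) (hI : I = span {f1, f2, f}) :
    Function.Surjective (toKosH1 f1 f2 f I k hI) := by
  intro y
  obtain ⟨⟨v, hv⟩, rfl⟩ := Submodule.Quotient.mk_surjective _ y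
  obtain ⟨⟨hv0, hv1, hv2⟩, hv⟩ := (mem_kosZ1_iff f1 f2 f I k v).1 hv
  obtain ⟨u1, hu1, u2, hu2, c, hc⟩ := exists_eq_of_mem_pow_succ hJ hI hv2
  have hf : f ∈ I := hI ▸ Ideal.subset_span (by simp)
  refine ⟨⟨![c, -(v 0 + f * u1), -(v 1 + f * u2)], mem_colonSyz_iff.2 ⟨?_, ?_, ?_⟩⟩, ?_⟩
  · exact neg_mem (add_mem hv0 (mul_mem_pow_succ hf hu1))
  · exact neg_mem (add_mem hv1 (mul_mem_pow_succ hf hu2))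
  · show c * f ^ (k + 2) = -(v 0 + f * u1) * f1 + -(v 1 + f * u2) * f2
    linear_combination hv + f * hc
  · refine (Submodule.Quotient.eq _).2 ((mem_kosB1_iff f1 f2 f I k _).2
      ⟨0, zero_mem _, -u1, neg_mem hu1, -u2, neg_mem hu2, ?_⟩)
    ext i
    fin_cases i <;> simp [syzToCycle_apply]
    linear_combination -hc

lemma toColonQuot_surjective (hJ : J = span {f1, f2}) :
    Function.Surjective (toColonQuot f1 f2 f J I k hJ) := by
  intro y
  obtain ⟨⟨c, hc⟩, rfl⟩ := Submodule.Quotient.mk_surjective _ y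
  rw [Ideal.mem_colon_span_singleton, hJ] at hc
  obtain ⟨a1, ha1, a2, ha2, hc⟩ := mem_span_pair_mul_iff.1 hc
  exact ⟨⟨![c, a1, a2], mem_colonSyz_iff.2 ⟨ha1, ha2,
    show c * f ^ (k + 2) = a1 * f1 + a2 * f2 by linear_combination -hc⟩⟩, rfl⟩

lemma ker_toKosH1_le_ker_toColonQuot (hJ : J = span {f1, f2}) (hI : I = span {f1, f2, f}) :
    LinearMap.ker (toKosH1 f1 f2 f I k hI) ≤ LinearMap.ker (toColonQuot f1 f2 f J I k hJ) := by
  intro v hv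
  rw [LinearMap.mem_ker, toKosH1_eq_zero_iff, mem_kosB1_iff] at hv
  obtain ⟨t0, -, t1, ht1, t2, ht2, hv⟩ := hv
  rw [LinearMap.mem_ker, toColonQuot_eq_zero_iff, hJ]
  refine mem_span_pair_mul_iff.2 ⟨t1, ht1, t2, ht2, ?_⟩
  simpa [syzToCycle_apply, mul_comm] using congrFun hv 2

lemma ker_toColonQuot_le_ker_toKosH1 (hJ : J = span {f1, f2}) (hI : I = span {f1, f2, f})
    (hann : (⊥ : Ideal R).colon (span {f1}) ⊓ I ^ (k + 1) = ⊥)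
    (ha : (span {f1} * I ^ (k + 1)).colon (span {f2}) ⊓ I ^ (k + 1) ≤ span {f1} * I ^ k) :
    LinearMap.ker (toColonQuot f1 f2 f J I k hJ) ≤ LinearMap.ker (toKosH1 f1 f2 f I k hI) := by
  rintro ⟨v, hv⟩ hker
  rw [LinearMap.mem_ker, toColonQuot_eq_zero_iff, hJ] at hker
  obtain ⟨u1, hu1, u2, hu2, hker⟩ := mem_span_pair_mul_iff.1 hker
  obtain ⟨hv1, hv2, hv⟩ := mem_colonSyz_iff.1 hv
  have hf : f ∈ I := hI ▸ Ideal.subset_span (by simp)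
  have hf2 : f2 ∈ I := hI ▸ Ideal.subset_span (by simp)
  set A1 := -v 1 + f * u1
  set A2 := -v 2 + f * u2
  have hA1 : A1 ∈ I ^ (k + 1) := add_mem (neg_mem hv1) (mul_mem_pow_succ hf hu1)
  have hA2 : A2 ∈ I ^ (k + 1) := add_mem (neg_mem hv2) (mul_mem_pow_succ hf hu2)
  have hrel : A1 * f1 + A2 * f2 = 0 := by linear_combination f * hker + hv
  obtain ⟨u, hu, hA2u⟩ : ∃ u ∈ I ^ k, f1 * u = A2 := by
    refine Ideal.mem_span_singleton_mul.1 (ha ⟨?_, hA2⟩)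
    rw [SetLike.mem_coe, Ideal.mem_colon_span_singleton]
    exact Ideal.mem_span_singleton_mul.2 ⟨-A1, neg_mem hA1, by linear_combination -hrel⟩
  have hA1u : A1 + f2 * u = 0 := by
    have hmem : A1 + f2 * u ∈ (⊥ : Ideal R).colon (span {f1}) ⊓ I ^ (k + 1) := by
      refine ⟨?_, add_mem hA1 (mul_mem_pow_succ hf2 hu)⟩
      rw [SetLike.mem_coe, Ideal.mem_colon_span_singleton, Ideal.mem_bot]
      linear_combination hrel + f2 * hA2u
    rwa [hann, Ideal.mem_bot] at hmem
  rw [LinearMap.mem_ker, toKosH1_eq_zero_iff, mem_kosB1_iff]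
  refine ⟨u, hu, u1, hu1, u2, hu2, ?_⟩
  rw [syzToCycle_apply]
  exact Matrix.vec3_eq (by linear_combination -hA1u) (by linear_combination hA2u)
    (by linear_combination hker)

lemma colon_inf_pow_le_of_ker_le (hJ : J = span {f1, f2}) (hI : I = span {f1, f2, f})
    (hker : LinearMap.ker (toColonQuot f1 f2 f J I k hJ) ≤ LinearMap.ker (toKosH1 f1 f2 f I k hI))
    (hprev : (span {f1} * I ^ k).colon (span {f2}) ⊓ I ^ k ≤
      (span {f1} * I ^ k).colon (span {f})) :
    (span {f1} * I ^ (k + 1)).colon (span {f2}) ⊓ I ^ (k + 1) ≤ span {f1} * I ^ k := by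
  rintro x ⟨hx, hxI⟩
  rw [SetLike.mem_coe, Ideal.mem_colon_span_singleton] at hx
  obtain ⟨y, hy, hxy⟩ := Ideal.mem_span_singleton_mul.1 hx
  have hw : ![0, -y, x] ∈ colonSyz f1 f2 f I k := mem_colonSyz_iff.2 ⟨neg_mem hy, hxI,
    show 0 * f ^ (k + 2) = -y * f1 + x * f2 by linear_combination hxy⟩
  have hB := @hker ⟨_, hw⟩ (by simp [toColonQuot_eq_zero_iff])
  rw [LinearMap.mem_ker, toKosH1_eq_zero_iff, mem_kosB1_iff] at hB
  obtain ⟨t0, ht0, t1, ht1, t2, ht2, ht⟩ := hB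
  have hx : f1 * t0 - f * t2 = -x := by simpa [syzToCycle_apply] using congrFun ht 1
  have hrel : f1 * t1 + f2 * t2 = 0 := by simpa [syzToCycle_apply] using congrFun ht 2
  have hft2 : t2 * f ∈ span {f1} * I ^ k := by
    refine Ideal.mem_colon_span_singleton.1 (hprev ⟨?_, ht2⟩)
    rw [SetLike.mem_coe, Ideal.mem_colon_span_singleton]
    exact Ideal.mem_span_singleton_mul.2 ⟨-t1, neg_mem ht1, by linear_combination -hrel⟩
  rw [show x = t2 * f - f1 * t0 by linear_combination hx]
  exact sub_mem hft2 (Ideal.mul_mem_mul (Ideal.mem_span_singleton_self f1) ht0)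

end Comparison

lemma mul_pow_le_colon_mul_pow_succ {f : R} {I : Ideal R} (a : Ideal R) (hf : f ∈ I) (m : ℕ) :
    a * I ^ m ≤ (a * I ^ (m + 1)).colon (span {f}) := fun x hx => by
  rw [Ideal.mem_colon_span_singleton, pow_succ, ← mul_assoc]
  exact Ideal.mul_mem_mul hx hf

lemma nonempty_linearEquiv_iff_ker_toColonQuot_le [IsNoetherianRing R] {f1 f2 f : R}
    {J I : Ideal R} (hJ : J = span {f1, f2}) (hI : I = span {f1, f2, f}) (k : ℕ) :
    Nonempty (kosH1 I ![f1, f2, f] (k + 2) ≃ₗ[R]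
        idealQuot ((J * I ^ (k + 1)).colon (span {f ^ (k + 2)}))
          ((J * I ^ k).colon (span {f ^ (k + 1)}))) ↔
      LinearMap.ker (toColonQuot f1 f2 f J I k hJ) ≤ LinearMap.ker (toKosH1 f1 f2 f I k hI) :=
  nonempty_linearEquiv_iff_ker_le_ker (toKosH1_surjective hJ hI) (toColonQuot_surjective hJ)
    (ker_toKosH1_le_ker_toColonQuot hJ hI)

theorem stmt9_general {R : Type*} [CommRing R] [IsNoetherianRing R]
    (f1 f2 f : R)
    (J I : Ideal R) (hJ : J = Ideal.span {f1, f2}) (hI : I = Ideal.span {f1, f2, f})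
    (L : ℕ)
    (hann : ∀ d : ℕ, 1 ≤ d → d ≤ L →
      Submodule.colon (⊥ : Ideal R) (Ideal.span {f1}) ⊓ I ^ (d - 1) = ⊥)
    (hcol : Submodule.colon (Ideal.span {f1}) (Ideal.span {f2}) ≤
      Submodule.colon (Ideal.span {f1}) (Ideal.span {f})) :
    (∀ d : ℕ, 2 ≤ d → d ≤ L →
        Submodule.colon (Ideal.span {f1} * I ^ (d - 1)) (Ideal.span {f2}) ⊓ I ^ (d - 1) ≤
          Ideal.span {f1} * I ^ (d - 2)) ↔
    (∀ d : ℕ, 2 ≤ d → d ≤ L →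
        Nonempty (kosH1 I ![f1, f2, f] d ≃ₗ[R]
          idealQuot (Submodule.colon (J * I ^ (d - 1)) (Ideal.span {f ^ d}))
            (Submodule.colon (J * I ^ (d - 2)) (Ideal.span {f ^ (d - 1)})))) := by
  have hf : f ∈ I := hI ▸ Ideal.subset_span (by simp)
  constructor
  · intro ha d hd hdL
    obtain ⟨k, rfl⟩ : ∃ k, d = k + 2 := ⟨d - 2, by omega⟩
    exact (nonempty_linearEquiv_iff_ker_toColonQuot_le hJ hI k).2
      (ker_toColonQuot_le_ker_toKosH1 hJ hI (hann (k + 2) (by omega) hdL) (ha (k + 2) hd hdL))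
  · intro hiso
    have ha : ∀ k, k + 2 ≤ L →
        (span {f1} * I ^ (k + 1)).colon (span {f2}) ⊓ I ^ (k + 1) ≤ span {f1} * I ^ k := by
      intro k
      induction k with
      | zero =>
        intro hk
        exact colon_inf_pow_le_of_ker_le hJ hI
          ((nonempty_linearEquiv_iff_ker_toColonQuot_le hJ hI 0).1 (hiso 2 le_rfl hk))
          (by simpa using hcol)
      | succ m ih =>
        intro hk
        exact colon_inf_pow_le_of_ker_le hJ hI
          ((nonempty_linearEquiv_iff_ker_toColonQuot_le hJ hI (m + 1)).1
            (hiso (m + 3) (by omega) hk))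
          ((ih (by omega)).trans (mul_pow_le_colon_mul_pow_succ _ hf m))
    intro d hd hdL
    obtain ⟨k, rfl⟩ : ∃ k, d = k + 2 := ⟨d - 2, by omega⟩
    exact ha k hdL

theorem stmt9 {R : Type*} [CommRing R] [IsNoetherianRing R] [IsLocalRing R]
    (f1 f2 f : R) (h1 : f1 ∈ IsLocalRing.maximalIdeal R)
    (h2 : f2 ∈ IsLocalRing.maximalIdeal R) (hfm : f ∈ IsLocalRing.maximalIdeal R)
    (J I : Ideal R) (hJ : J = Ideal.span {f1, f2}) (hI : I = Ideal.span {f1, f2, f})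
    (L : ℕ) (hL : 2 ≤ L)
    (hann : ∀ d : ℕ, 1 ≤ d → d ≤ L →
      Submodule.colon (⊥ : Ideal R) (Ideal.span {f1}) ⊓ I ^ (d - 1) = ⊥)
    (hcol : Submodule.colon (Ideal.span {f1}) (Ideal.span {f2}) ≤
      Submodule.colon (Ideal.span {f1}) (Ideal.span {f})) :
    (∀ d : ℕ, 2 ≤ d → d ≤ L →
        Submodule.colon (Ideal.span {f1} * I ^ (d - 1)) (Ideal.span {f2}) ⊓ I ^ (d - 1) ≤
          Ideal.span {f1} * I ^ (d - 2)) ↔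
    (∀ d : ℕ, 2 ≤ d → d ≤ L →
        Nonempty (kosH1 I ![f1, f2, f] d ≃ₗ[R]
          idealQuot (Submodule.colon (J * I ^ (d - 1)) (Ideal.span {f ^ d}))
            (Submodule.colon (J * I ^ (d - 2)) (Ideal.span {f ^ (d - 1)})))) :=
  stmt9_general f1 f2 f J I hJ hI L hann hcol
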